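/- arXiv:math/9911057 — 2 statements merged into one kernel-verified Lean document; each statement's English description precedes it below -/
import Mathlib

section
/- Let R be a commutative ring, I ⊆ R an ideal, and E ⊆ R^k a submodule such that every (l+1)×(l+1) minor of any matrix formed from l+1 elements of E lies in I, where l is the dimension of the image E(0) of E under evaluation at 0 (i.e., under the quotient map R → R/m for the maximal ideal m of formal power series vanishing at 0, with R = the formal power series ring). If v_1,…,v_l ∈ E are such that v_1(0),…,v_l(0) form a basis of E(0), then every e ∈ E can be written as e = a_1 v_1 + ⋯ + a_l v_l + e′ with a_j ∈ R and every component of e′ in I. -/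
/-!
Choose `l` columns `c` on which the constant terms `v i (c j)(0)` form an invertible matrix; then
`M = (v i (c j))` has a unit determinant in the local ring `ℂ⟦Z⟧`. Solve `a ⬝ M = e ∘ c` and put
`e' = e - ∑ a i • v i ∈ E`, which vanishes on the columns `c`. Bordering `M` by the row `e'` and
any column `j` gives an `(l+1)`-minor equal to `det M * e' j`, which lies in `I`; since `det M`
is a unit, `e' j ∈ I`.
-/

noncomputable section

def evalZero (m k : ℕ) (v : Fin k → MvPowerSeries (Fin m) ℂ) : Fin k → ℂ :=
  fun j => MvPowerSeries.constantCoeff (v j)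

open Matrix

theorem Matrix.exists_det_submatrix_ne_zero_of_linearIndependent_rows {K m n : Type*} [Field K]
    [Fintype m] [DecidableEq m] [Fintype n] (A : Matrix m n K) (hA : LinearIndependent K A) :
    ∃ c : m → n, (A.submatrix id c).det ≠ 0 := by
  have hcols : Submodule.span K (Set.range A.col) = ⊤ := by
    apply Submodule.eq_top_of_finrank_eq
    rw [← A.rank_eq_finrank_span_cols, hA.rank_matrix, Module.finrank_fintype_fun_eq_card]
  obtain ⟨κ, a, -, hspan, hli⟩ := exists_linearIndependent' K A.col
  let b : Module.Basis κ K (m → K) := Module.Basis.mk hli (by rw [hspan, hcols])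
  have : Fintype κ := FiniteDimensional.fintypeBasisIndex b
  obtain ⟨e⟩ : Nonempty (m ≃ κ) :=
    Fintype.card_eq.mp (by simpa using Module.finrank_eq_card_basis b)
  refine ⟨a ∘ e, ((isUnit_iff_isUnit_det _).mp
    (linearIndependent_cols_iff_isUnit.mp ?_)).ne_zero⟩
  exact hli.comp e e.injective

theorem Matrix.det_of_snoc_of_forall_apply_eq_zero {R n : Type*} [CommRing R] {l : ℕ}
    (v : Fin l → n → R) (w : n → R) (c : Fin l → n) (j : n) (hw : ∀ i, w (c i) = 0) :
    det (of fun i i' =>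
        (Fin.snoc v w : Fin (l + 1) → n → R) i ((Fin.snoc c j : Fin (l + 1) → n) i')) =
      det (of fun i i' => v i (c i')) * w j := by
  -- the last row is `(0, …, 0, w j)`
  rw [det_succ_row _ (Fin.last l), Fin.sum_univ_castSucc]
  simp [hw, Fin.succAbove_last, submatrix, mul_comm]

theorem exists_sub_sum_mul_mem_of_minors_mem {R n : Type*} [CommRing R] (I : Ideal R)
    (E : Submodule R (n → R)) {l : ℕ}
    (hrank : ∀ w : Fin (l + 1) → n → R, (∀ i, w i ∈ E) → ∀ c : Fin (l + 1) → n,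
      det (of fun i j => w i (c j)) ∈ I)
    (v : Fin l → n → R) (hv : ∀ i, v i ∈ E) (c : Fin l → n)
    (hc : IsUnit (det (of fun i j => v i (c j)))) :
    ∀ e ∈ E, ∃ a : Fin l → R, ∀ j, e j - ∑ i, a i * v i j ∈ I := by
  intro e he
  obtain ⟨a, ha⟩ :=
    vecMul_surjective_iff_isUnit.mpr ((isUnit_iff_isUnit_det _).mpr hc) (fun j => e (c j))
  set e' : n → R := e - ∑ i, a i • v i with he'
  have he'E : e' ∈ E := E.sub_mem he (E.sum_mem fun i _ => E.smul_mem (a i) (hv i))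
  have he'c : ∀ i, e' (c i) = 0 := fun i => by
    simpa [he', vecMul, dotProduct, sub_eq_zero] using (congrFun ha i).symm
  refine ⟨a, fun j => ?_⟩
  have hsnoc : ∀ i, (Fin.snoc v e' : Fin (l + 1) → n → R) i ∈ E :=
    Fin.lastCases (by simpa using he'E) (fun i => by simpa using hv i)
  have hminor := hrank _ hsnoc (Fin.snoc c j)
  rw [det_of_snoc_of_forall_apply_eq_zero v e' c j he'c,
    Ideal.unit_mul_mem_iff_mem I hc] at hminor
  simpa [he'] using hminor

theorem constant_rank_generation_general
    (m k : ℕ) (I : Ideal (MvPowerSeries (Fin m) ℂ))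
    (E : Submodule (MvPowerSeries (Fin m) ℂ) (Fin k → MvPowerSeries (Fin m) ℂ))
    (l : ℕ)
    (hrank : ∀ w : Fin (l + 1) → (Fin k → MvPowerSeries (Fin m) ℂ),
      (∀ i, w i ∈ E) → ∀ c : Fin (l + 1) → Fin k,
        Matrix.det (fun i j => w i (c j)) ∈ I)
    (v : Fin l → (Fin k → MvPowerSeries (Fin m) ℂ)) (hv : ∀ i, v i ∈ E)
    (hindep : LinearIndependent ℂ (fun i => evalZero m k (v i))) :
    ∀ e ∈ E, ∃ a : Fin l → MvPowerSeries (Fin m) ℂ,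
      ∀ j : Fin k, e j - ∑ i, a i * v i j ∈ I := by
  obtain ⟨c, hc⟩ := exists_det_submatrix_ne_zero_of_linearIndependent_rows
    (of fun i j => evalZero m k (v i) j) hindep
  refine exists_sub_sum_mul_mem_of_minors_mem I E hrank v hv c ?_
  rw [MvPowerSeries.isUnit_iff_constantCoeff, RingHom.map_det]
  exact hc.isUnit

/-- let `R = ℂ[[X_1,…,X_m]]`, `I ⊆ R` an ideal, `E ⊆ R^k` a submodule, and
`l = dim_ℂ E(0)` where `E(0)` is the image of `E` under evaluation at `0`.  Assume `E` is
of constant rank `l` over `I`: every `(l+1) × (l+1)` minor of any matrix formed from `l+1`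
elements of `E` lies in `I`.  If `v_1, …, v_l ∈ E` are such that `v_1(0), …, v_l(0)` form
a basis of `E(0)`, then every `e ∈ E` can be written as `e = a_1 v_1 + ⋯ + a_l v_l + e′`
with `a_j ∈ R` and every component of `e′` in `I`. -/
theorem constant_rank_generation
    (m k : ℕ) (I : Ideal (MvPowerSeries (Fin m) ℂ))
    (E : Submodule (MvPowerSeries (Fin m) ℂ) (Fin k → MvPowerSeries (Fin m) ℂ))
    (l : ℕ)
    (hl : l = Module.finrank ℂ (Submodule.span ℂ (evalZero m k '' (E : Set _))))
    (hrank : ∀ w : Fin (l + 1) → (Fin k → MvPowerSeries (Fin m) ℂ),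
      (∀ i, w i ∈ E) → ∀ c : Fin (l + 1) → Fin k,
        Matrix.det (fun i j => w i (c j)) ∈ I)
    (v : Fin l → (Fin k → MvPowerSeries (Fin m) ℂ)) (hv : ∀ i, v i ∈ E)
    (hindep : LinearIndependent ℂ (fun i => evalZero m k (v i)))
    (hspan : Submodule.span ℂ (Set.range fun i => evalZero m k (v i)) =
      Submodule.span ℂ (evalZero m k '' (E : Set _))) :
    ∀ e ∈ E, ∃ a : Fin l → MvPowerSeries (Fin m) ℂ,
      ∀ j : Fin k, e j - ∑ i, a i * v i j ∈ I :=
  constant_rank_generation_general m k I E l hrank v hv hindep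
end
end

section
/- Without the constant degeneracy assumption, one inequality of the preceding statement still holds: if M ⊂ ℂ^N, M′ ⊂ ℂ^{N′} are generic formal submanifolds, H : M → M′ a formal holomorphic map with degeneracy s at 0, and s̃ is the dimension of { X(0) : X a formal holomorphic vector field tangent to M′ along H(M) }, then s̃ ≤ s. -/
noncomputable section

namespace CR

/-- Formal partial derivative `∂/∂s` of a multivariate formal power series. -/
def pd {σ : Type*} (s : σ) (f : MvPowerSeries σ ℂ) : MvPowerSeries σ ℂ :=
  fun m => ((m s : ℕ) + 1 : ℂ) * f (m + Finsupp.single s 1)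

/-- Truncation bound used for substitution. -/
def bnd (σ : Type*) [Fintype σ] (n : ℕ) : σ →₀ ℕ :=
  Finsupp.equivFunOnFinite.symm (fun _ => n)

/-- Substitution of formal power series (the composition `f ∘ g`, computed
coefficientwise via truncation; it is the correct composition whenever each `g v` has
zero constant term). -/
def subst {σ σ' : Type*} [Fintype σ'] [DecidableEq σ']
    (g : σ' → MvPowerSeries σ ℂ) (f : MvPowerSeries σ' ℂ) : MvPowerSeries σ ℂ :=
  fun m => MvPowerSeries.coeff (R := ℂ) m
    (MvPolynomial.aeval g (MvPowerSeries.trunc ℂ (bnd σ' (m.sum fun _ v => v) + bnd σ' 1) f))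

/-- Conjugation of a formal power series in the doubled variables `(Z, ζ)` : conjugate the
coefficients and swap the two blocks of variables (`Z ↔ ζ`). -/
def bar {σ0 : Type*} (f : MvPowerSeries (σ0 ⊕ σ0) ℂ) : MvPowerSeries (σ0 ⊕ σ0) ℂ :=
  fun m => starRingEnd ℂ (f (Finsupp.mapDomain Sum.swap m))

/-- The ring of formal power series `ℂ[[Z,ζ]]` in `2N` variables. -/
abbrev FPS (N : ℕ) := MvPowerSeries (Fin N ⊕ Fin N) ℂ

/-- A series is holomorphic (formal series in `Z` alone) if all `ζ`-derivatives vanish. -/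
def Holo {N : ℕ} (f : FPS N) : Prop := ∀ i : Fin N, pd (Sum.inr i) f = 0

/-- Application of the formal `(0,1)` vector field `Σ_j b_j ∂/∂ζ_j`. -/
def applyCR {N : ℕ} (b : Fin N → FPS N) (f : FPS N) : FPS N :=
  ∑ j, b j * pd (Sum.inr j) f

/-- A formal `(0,1)` vector field is a CR vector field tangent to the formal manifold with
ideal `I` if it maps `I` into `I`. -/
def TangentCR {N : ℕ} (I : Ideal (FPS N)) (b : Fin N → FPS N) : Prop :=
  ∀ f ∈ I, applyCR b f ∈ I

/-- The substitution data `(H(Z), H̄(ζ))` associated to a formal holomorphic map `H`. -/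
def Hmap {N N' : ℕ} (H : Fin N' → FPS N) : (Fin N' ⊕ Fin N') → FPS N :=
  Sum.elim H (fun j => bar (H j))

/-- `H` maps the formal manifold with ideal `I` into the one with ideal `I'`. -/
def MapsInto {N N' : ℕ} (I : Ideal (FPS N)) (I' : Ideal (FPS N')) (H : Fin N' → FPS N) :
    Prop :=
  ∀ f ∈ I', subst (Hmap H) f ∈ I

/-- Componentwise evaluation at `0`. -/
def ev0 {N k : ℕ} (v : Fin k → FPS N) : Fin k → ℂ :=
  fun j => MvPowerSeries.constantCoeff (σ := Fin N ⊕ Fin N) (R := ℂ) (v j)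

/-- The generating sets of the modules `E_k`: CR-derivatives of order `≤ k` of the
pulled-back complex gradients `ρ′_{j,Z′}(H(Z), H̄(ζ))`. -/
def gradSets {N N' d' : ℕ} (I : Ideal (FPS N)) (H : Fin N' → FPS N)
    (ρ' : Fin d' → FPS N') : ℕ → Set (Fin N' → FPS N)
  | 0 => Set.range fun j => fun k => subst (Hmap H) (pd (Sum.inl k) (ρ' j))
  | k + 1 => gradSets I H ρ' k ∪
      {v | ∃ b : Fin N → FPS N, TangentCR I b ∧
        ∃ w ∈ gradSets I H ρ' k, v = fun j => applyCR b (w j)}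

/-- The identity map of `ℂ^N` as a formal holomorphic map. -/
def idMap (N : ℕ) : Fin N → FPS N := fun j => MvPowerSeries.X (Sum.inl j)

/-- `E_k(0)` : the span of the values at `0`. -/
def Ek0 {N N' d' : ℕ} (I : Ideal (FPS N)) (H : Fin N' → FPS N) (ρ' : Fin d' → FPS N')
    (k : ℕ) : Submodule ℂ (Fin N' → ℂ) :=
  Submodule.span ℂ (ev0 '' gradSets I H ρ' k)

/-- The stable value `E(0) = ⋃_k E_k(0)`. -/
def E0 {N N' d' : ℕ} (I : Ideal (FPS N)) (H : Fin N' → FPS N) (ρ' : Fin d' → FPS N') :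
    Submodule ℂ (Fin N' → ℂ) :=
  Submodule.span ℂ (ev0 '' ⋃ k, gradSets I H ρ' k)

end CR

/-!
A holomorphic vector field `X = Σ a_j ∂/∂Z′_j` tangent to `M′` along `H(M)` pairs every gradient
`ρ′_{l,Z′}(H(Z), H̄(ζ))` into the ideal `I` of `M`. Since the `a_j` are holomorphic, a CR vector
field commutes with multiplication by them, so the pairing with every CR-derivative of these
gradients stays in `I` as well. Elements of `I` vanish at `0`, hence `X(0)` is orthogonal, for the
bilinear dot product, to all of `E(0)`, and the space of such values has dimension at most
`N′ - dim E(0) = s`.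
-/

open Module

theorem finrank_span_add_finrank_span_le_of_dotProduct_eq_zero {K ι : Type*} [Field K]
    [Fintype ι] {s t : Set (ι → K)} (h : ∀ x ∈ s, ∀ y ∈ t, x ⬝ᵥ y = 0) :
    finrank K (Submodule.span K s) + finrank K (Submodule.span K t) ≤ Fintype.card ι := by
  classical
  let Φ := dotProductEquiv K ι
  have hΦ : (Submodule.span K s).map Φ.toLinearMap ≤ (Submodule.span K t).dualAnnihilator := by
    rw [Submodule.map_span, Submodule.span_le]
    rintro _ ⟨x, hx, rfl⟩
    rw [SetLike.mem_coe, Submodule.mem_dualAnnihilator]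
    exact fun y hy => (Submodule.span_le (p := LinearMap.ker (Φ x))).mpr (h x hx) hy
  calc finrank K (Submodule.span K s) + finrank K (Submodule.span K t)
      = finrank K ((Submodule.span K s).map Φ.toLinearMap) + finrank K (Submodule.span K t) := by
        rw [LinearEquiv.finrank_map_eq]
    _ ≤ finrank K (Submodule.span K t).dualAnnihilator + finrank K (Submodule.span K t) := by
        gcongr
        exact Submodule.finrank_mono hΦ
    _ = Fintype.card ι := by
        rw [add_comm, Subspace.finrank_add_finrank_dualAnnihilator_eq,
          finrank_fintype_fun_eq_card]

namespace CR

theorem pd_eq_pderiv {σ : Type*} (s : σ) (f : MvPowerSeries σ ℂ) :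
    pd s f = MvPowerSeries.pderiv ℂ s f := by
  ext m
  rw [MvPowerSeries.coeff_pderiv, mul_comm]
  rfl

variable {N : ℕ}

theorem applyCR_sum {ι : Type*} (b : Fin N → FPS N) (t : Finset ι) (f : ι → FPS N) :
    applyCR b (∑ i ∈ t, f i) = ∑ i ∈ t, applyCR b (f i) := by
  simp only [applyCR, pd_eq_pderiv, map_sum, Finset.mul_sum]
  exact Finset.sum_comm

theorem applyCR_mul_of_holo (b : Fin N → FPS N) {a : FPS N} (ha : Holo a) (f : FPS N) :
    applyCR b (a * f) = a * applyCR b f := by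
  simp only [applyCR, Finset.mul_sum]
  refine Finset.sum_congr rfl fun i _ => ?_
  rw [pd_eq_pderiv, Derivation.leibniz, ← pd_eq_pderiv, ← pd_eq_pderiv, ha i, smul_zero,
    add_zero, smul_eq_mul]
  ring

theorem applyCR_dotProduct_of_holo {ι : Type*} [Fintype ι] (b : Fin N → FPS N)
    {a : ι → FPS N} (ha : ∀ j, Holo (a j)) (w : ι → FPS N) :
    applyCR b (a ⬝ᵥ w) = a ⬝ᵥ fun j => applyCR b (w j) := by
  simp only [dotProduct, applyCR_sum, applyCR_mul_of_holo b (ha _)]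

theorem dotProduct_mem_of_mem_gradSets {N' d' : ℕ} {I : Ideal (FPS N)} {H : Fin N' → FPS N}
    {ρ' : Fin d' → FPS N'} {a : Fin N' → FPS N} (ha : ∀ j, Holo (a j))
    (hρ' : ∀ l, (a ⬝ᵥ fun j => subst (Hmap H) (pd (Sum.inl j) (ρ' l))) ∈ I) :
    ∀ k, ∀ w ∈ gradSets I H ρ' k, a ⬝ᵥ w ∈ I
  | 0, _, ⟨l, rfl⟩ => hρ' l
  | k + 1, w, .inl hw => dotProduct_mem_of_mem_gradSets ha hρ' k w hw
  | k + 1, _, .inr ⟨b, hb, w, hw, rfl⟩ => by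
    rw [← applyCR_dotProduct_of_holo b ha]
    exact hb _ (dotProduct_mem_of_mem_gradSets ha hρ' k w hw)

end CR

open CR in
theorem dim_tangent_holomorphic_fields_le_degeneracy_general
    (N N' d d' : ℕ)
    (ρ : Fin d → FPS N) (ρ' : Fin d' → FPS N')
    (I : Ideal (FPS N)) (I' : Ideal (FPS N'))
    (hI : I = Ideal.span (Set.range ρ)) (hI' : I' = Ideal.span (Set.range ρ'))
    (hρ0 : ∀ i, MvPowerSeries.constantCoeff (R := ℂ) (ρ i) = 0)
    (H : Fin N' → FPS N)
    -- the degeneracy s of H at 0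
    (s : ℕ) (hsdim : Module.finrank ℂ (E0 I H ρ') + s = N')
    -- stilde, the dimension of the space of values at 0 of formal holomorphic vector fields
    -- tangent to M′ along H(M)
    (stilde : ℕ) (hstilde : stilde = Module.finrank ℂ (Submodule.span ℂ
      {x : Fin N' → ℂ | ∃ a : Fin N' → FPS N,
        (∀ j, Holo (a j)) ∧
        (∀ φ ∈ I', (∑ j, a j * subst (Hmap H) (pd (Sum.inl j) φ)) ∈ I) ∧
        (∀ j, MvPowerSeries.constantCoeff (R := ℂ) (a j) = x j)})) :
    stilde ≤ s := by
  have hI0 : I ≤ RingHom.ker (MvPowerSeries.constantCoeff (R := ℂ)) :=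
    hI ▸ Ideal.span_le.mpr (Set.range_subset_iff.mpr hρ0)
  rw [hstilde, ← add_le_add_iff_left (Module.finrank ℂ (E0 I H ρ')), hsdim, add_comm]
  calc _ ≤ Fintype.card (Fin N') := finrank_span_add_finrank_span_le_of_dotProduct_eq_zero ?_
    _ = N' := Fintype.card_fin N'
  rintro x ⟨a, ha, hpair, hx⟩ _ ⟨w, hw, rfl⟩
  obtain rfl : x = ev0 a := funext fun j => (hx j).symm
  obtain ⟨k, hk⟩ := Set.mem_iUnion.mp hw
  have hmem := dotProduct_mem_of_mem_gradSets ha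
    (fun l => hpair _ (hI' ▸ Ideal.subset_span ⟨l, rfl⟩)) k w hk
  exact (RingHom.map_dotProduct _ a w).symm.trans (hI0 hmem)

open CR in
/-- without any constant degeneracy assumption, if `H : M → M′` is a formal
holomorphic map with degeneracy `s` at `0` (i.e. `dim_ℂ E(0) + s = N′`), and `stilde` is the
dimension of `{ X(0) : X a formal holomorphic vector field tangent to M′ along H(M) }`,
then `stilde ≤ s`. -/
theorem dim_tangent_holomorphic_fields_le_degeneracy
    (N N' d d' : ℕ)
    (ρ : Fin d → FPS N) (ρ' : Fin d' → FPS N')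
    (I : Ideal (FPS N)) (I' : Ideal (FPS N'))
    (hI : I = Ideal.span (Set.range ρ)) (hI' : I' = Ideal.span (Set.range ρ'))
    (hρ0 : ∀ i, MvPowerSeries.constantCoeff (R := ℂ) (ρ i) = 0)
    (hρ'0 : ∀ j, MvPowerSeries.constantCoeff (R := ℂ) (ρ' j) = 0)
    (hreal : ∀ i, bar (ρ i) ∈ I) (hreal' : ∀ j, bar (ρ' j) ∈ I')
    (hgen : LinearIndependent ℂ (fun i (j : Fin N) =>
      MvPowerSeries.constantCoeff (R := ℂ) (pd (Sum.inl j) (ρ i))))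
    (hgen' : LinearIndependent ℂ (fun i (j : Fin N') =>
      MvPowerSeries.constantCoeff (R := ℂ) (pd (Sum.inl j) (ρ' i))))
    (H : Fin N' → FPS N) (hHol : ∀ j, Holo (H j))
    (hH0 : ∀ j, MvPowerSeries.constantCoeff (R := ℂ) (H j) = 0)
    (hmap : MapsInto I I' H)
    -- the degeneracy s of H at 0
    (s : ℕ) (hsdim : Module.finrank ℂ (E0 I H ρ') + s = N')
    -- stilde, the dimension of the space of values at 0 of formal holomorphic vector fields
    -- tangent to M′ along H(M)
    (stilde : ℕ) (hstilde : stilde = Module.finrank ℂ (Submodule.span ℂ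
      {x : Fin N' → ℂ | ∃ a : Fin N' → FPS N,
        (∀ j, Holo (a j)) ∧
        (∀ φ ∈ I', (∑ j, a j * subst (Hmap H) (pd (Sum.inl j) φ)) ∈ I) ∧
        (∀ j, MvPowerSeries.constantCoeff (R := ℂ) (a j) = x j)})) :
    stilde ≤ s :=
  dim_tangent_holomorphic_fields_le_degeneracy_general N N' d d' ρ ρ' I I' hI hI' hρ0 H s hsdim
    stilde hstilde
end
end
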